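/- Let Σ=(X,𝒰,φ) be a forward complete control system and assume there exists a non-coercive ISS Lyapunov function for Σ. Then Σ has the uniform limit property (ULIM). -/

import Mathlib

/-!
Invert `α` to get a gain `γ ∈ K` with `α ∘ γ = 2σ`. While `‖φ(t,x,u)‖ > ε + γ(‖u‖)`, the
dissipation inequality gives `V̇ ≤ -α(‖φ‖) + σ(‖u‖) ≤ -α(ε)/2`, so by the comparison principle
for Dini derivatives `V` decreases along the trajectory at rate `α(ε)/2`. Since `V ≥ 0` and
`V(x) ≤ ψ₂(r)` on the ball of radius `r`, this can last at most `τ = 2(ψ₂(r) + 1)/α(ε)`.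
-/

open Set Filter

/-- Class `K`: continuous, strictly increasing on `[0,∞)` and vanishing at `0`. -/
def ClassK (γ : ℝ → ℝ) : Prop :=
  ContinuousOn γ (Ici 0) ∧ StrictMonoOn γ (Ici 0) ∧ γ 0 = 0

/-- Class `K∞`: class `K` and unbounded. -/
def ClassKinf (γ : ℝ → ℝ) : Prop :=
  ClassK γ ∧ ∀ c : ℝ, ∃ r : ℝ, 0 ≤ r ∧ c ≤ γ r

/-- The class `K∞ ∪ {0}`. -/
def ClassKinf0 (γ : ℝ → ℝ) : Prop :=
  ClassKinf γ ∨ ∀ r : ℝ, 0 ≤ r → γ r = 0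

/-- The class `K ∪ {0}`. -/
def ClassK0 (γ : ℝ → ℝ) : Prop :=
  ClassK γ ∨ ∀ r : ℝ, 0 ≤ r → γ r = 0

/-- Class `L`: continuous, strictly decreasing on `[0,∞)` with limit `0` at infinity. -/
def ClassL (γ : ℝ → ℝ) : Prop :=
  ContinuousOn γ (Ici 0) ∧ StrictAntiOn γ (Ici 0) ∧ Tendsto γ atTop (nhds 0)

/-- Class `KL`. -/
def ClassKL (β : ℝ → ℝ → ℝ) : Prop :=
  ContinuousOn (fun p : ℝ × ℝ => β p.1 p.2) ((Ici 0) ×ˢ (Ici 0)) ∧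
  (∀ t : ℝ, 0 ≤ t → ClassK (fun r => β r t)) ∧
  ∀ r : ℝ, 0 < r → StrictAntiOn (β r) (Ici 0) ∧ Tendsto (β r) atTop (nhds 0)

/-- A forward complete control system `Σ = (X, 𝒰, φ)`: inputs are functions
`u : ℝ₊ → U` (modelled as functions on `ℝ`, with only `t ≥ 0` relevant);
the set `inputs` of admissible inputs carries a norm `Unorm`, is shift invariant and
closed under concatenation; the transition map `phi` satisfies the identity property,
causality, continuity in time and the cocycle property. -/
structure ControlSystem (X U : Type*) [NormedAddCommGroup X] [NormedSpace ℝ X] [Zero U] where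
  /-- the set of admissible input functions -/
  inputs : Set (ℝ → U)
  /-- the norm of the input space -/
  Unorm : (ℝ → U) → ℝ
  Unorm_nonneg : ∀ u, 0 ≤ Unorm u
  /-- the zero input is admissible -/
  zero_mem : (fun _ : ℝ => (0 : U)) ∈ inputs
  Unorm_zero : Unorm (fun _ : ℝ => (0 : U)) = 0
  /-- the transition map `φ(t,x,u)` -/
  phi : ℝ → X → (ℝ → U) → X
  /-- axiom of shift invariance -/
  shift_mem : ∀ u ∈ inputs, ∀ τ : ℝ, 0 ≤ τ → (fun s => u (s + τ)) ∈ inputs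
  shift_norm : ∀ u ∈ inputs, ∀ τ : ℝ, 0 ≤ τ → Unorm (fun s => u (s + τ)) ≤ Unorm u
  /-- axiom of concatenation -/
  concat_mem : ∀ u₁ ∈ inputs, ∀ u₂ ∈ inputs, ∀ t : ℝ, 0 < t →
    (fun s => if s ≤ t then u₁ s else u₂ (s - t)) ∈ inputs
  /-- identity property -/
  identity : ∀ x u, phi 0 x u = x
  /-- causality -/
  causality : ∀ t : ℝ, 0 ≤ t → ∀ x : X, ∀ u ∈ inputs, ∀ v ∈ inputs,
    (∀ s ∈ Icc (0:ℝ) t, u s = v s) → phi t x u = phi t x v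
  /-- continuity of trajectories -/
  cont : ∀ x : X, ∀ u ∈ inputs, ContinuousOn (fun t => phi t x u) (Ici 0)
  /-- cocycle property -/
  cocycle : ∀ t : ℝ, 0 ≤ t → ∀ h : ℝ, 0 ≤ h → ∀ x : X, ∀ u ∈ inputs,
    phi h (phi t x u) (fun s => u (s + t)) = phi (t + h) x u

namespace ControlSystem

variable {X U : Type*} [NormedAddCommGroup X] [NormedSpace ℝ X] [Zero U]

/-- the zero input -/
def zeroIn : ℝ → U := fun _ => 0

/-- Uniform limit property. -/
def ULIM (S : ControlSystem X U) : Prop :=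
  ∃ γ, ClassK0 γ ∧
    ∀ ε : ℝ, 0 < ε → ∀ r : ℝ, 0 < r → ∃ τ : ℝ, 0 ≤ τ ∧
      ∀ x : X, ‖x‖ ≤ r → ∀ u ∈ S.inputs, ∃ t ∈ Icc (0:ℝ) τ,
        ‖S.phi t x u‖ ≤ ε + γ (S.Unorm u)

/-- The (generalized) Dini derivative of `V` along the trajectories of the system:
`limsup_{t → 0⁺} (V(φ(t,x,u)) - V(x))/t`, computed in the extended reals. -/
noncomputable def DiniLimsup (S : ControlSystem X U) (V : X → ℝ) (x : X) (u : ℝ → U) : EReal :=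
  Filter.limsup (fun t : ℝ => (((V (S.phi t x u) - V x) / t : ℝ) : EReal))
    (nhdsWithin (0:ℝ) (Ioi 0))

/-- A non-coercive ISS Lyapunov function. -/
def NonCoerciveISSLyapunov (S : ControlSystem X U) (V : X → ℝ) : Prop :=
  Continuous V ∧ (∀ x : X, 0 ≤ V x) ∧
  ∃ ψ₂ α σ, ClassKinf ψ₂ ∧ ClassKinf α ∧ ClassK σ ∧
    (∀ x : X, x ≠ 0 → 0 < V x) ∧ (∀ x : X, V x ≤ ψ₂ ‖x‖) ∧
    ∀ x : X, ∀ u ∈ S.inputs,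
      S.DiniLimsup V x u ≤ ((-α ‖x‖ + σ (S.Unorm u) : ℝ) : EReal)

open Topology

theorem _root_.ClassK.mono {γ : ℝ → ℝ} (hγ : ClassK γ) {r s : ℝ} (hr : 0 ≤ r) (hrs : r ≤ s) :
    γ r ≤ γ s :=
  hγ.2.1.monotoneOn hr (hr.trans hrs) hrs

theorem _root_.ClassK.nonneg {γ : ℝ → ℝ} (hγ : ClassK γ) {r : ℝ} (hr : 0 ≤ r) : 0 ≤ γ r := by
  simpa only [hγ.2.2] using hγ.mono le_rfl hr

theorem _root_.ClassK.pos {γ : ℝ → ℝ} (hγ : ClassK γ) {r : ℝ} (hr : 0 < r) : 0 < γ r := by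
  simpa only [hγ.2.2] using hγ.2.1 (le_refl (0 : ℝ)) hr.le hr

theorem _root_.ClassK.comp {f g : ℝ → ℝ} (hf : ClassK f) (hg : ClassK g) : ClassK (f ∘ g) :=
  ⟨hf.1.comp hg.1 fun _ ↦ hg.nonneg, hf.2.1.comp hg.2.1 fun _ ↦ hg.nonneg, by
    simp [hg.2.2, hf.2.2]⟩

theorem _root_.ClassK.const_mul {σ : ℝ → ℝ} (hσ : ClassK σ) {c : ℝ} (hc : 0 < c) :
    ClassK (fun s ↦ c * σ s) :=
  ⟨continuousOn_const.mul hσ.1, fun _ ha _ hb hab ↦ mul_lt_mul_of_pos_left (hσ.2.1 ha hb hab) hc,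
    by simp [hσ.2.2]⟩

theorem _root_.ClassKinf.surjOn {α : ℝ → ℝ} (hα : ClassKinf α) : SurjOn α (Ici 0) (Ici 0) := by
  intro y hy
  obtain ⟨R, hR, hRy⟩ := hα.2 y
  have hy' : y ∈ Icc (α 0) (α R) := by rw [hα.1.2.2]; exact ⟨hy, hRy⟩
  exact image_mono Icc_subset_Ici_self
    (intermediate_value_Icc hR (hα.1.1.mono Icc_subset_Ici_self) hy')

theorem _root_.StrictMonoOn.continuousOn_Ici_of_image_eq {α β : Type*} [LinearOrder α]
    [TopologicalSpace α] [OrderTopology α] [LinearOrder β] [TopologicalSpace β] [OrderTopology β]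
    [DenselyOrdered β] {f : α → β} {a : α} (hf : StrictMonoOn f (Ici a))
    (himg : f '' Ici a = Ici (f a)) : ContinuousOn f (Ici a) := by
  intro y hy
  rcases (mem_Ici.1 hy).eq_or_lt with rfl | hay
  · refine hf.continuousWithinAt_right_of_surjOn self_mem_nhdsWithin ?_
    rw [SurjOn, himg]
    exact Ioi_subset_Ici_self
  · refine (hf.continuousAt_of_image_mem_nhds (Ici_mem_nhds hay) ?_).continuousWithinAt
    rw [himg]
    exact Ici_mem_nhds (hf self_mem_Ici hy hay)

theorem _root_.ClassKinf.exists_classK_rightInvOn {α : ℝ → ℝ} (hα : ClassKinf α) :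
    ∃ β, ClassK β ∧ RightInvOn β α (Ici 0) := by
  set β := Function.invFunOn α (Ici 0)
  have hmaps : MapsTo β (Ici 0) (Ici 0) := hα.surjOn.mapsTo_invFunOn
  have hright : RightInvOn β α (Ici 0) := hα.surjOn.rightInvOn_invFunOn
  have hleft : LeftInvOn β α (Ici 0) := hα.1.2.1.injOn.leftInvOn_invFunOn
  have hmono : StrictMonoOn β (Ici 0) := fun y₁ h₁ y₂ h₂ h ↦ by
    by_contra! hle
    have := hα.1.mono (hmaps h₂) hle
    rw [hright h₁, hright h₂] at this
    exact this.not_gt h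
  have hzero : β 0 = 0 := by simpa only [hα.1.2.2] using hleft (self_mem_Ici (a := (0 : ℝ)))
  have himg : β '' Ici 0 = Ici (β 0) := by
    have hαimg : α '' Ici 0 = Ici 0 := hα.surjOn.image_eq_of_mapsTo fun _ ↦ hα.1.nonneg
    rw [hzero]
    simpa only [hαimg] using hleft.image_image
  exact ⟨β, ⟨hmono.continuousOn_Ici_of_image_eq himg, hmono, hzero⟩, hright⟩

theorem _root_.ClassKinf.exists_classK_comp_eqOn {α σ : ℝ → ℝ} (hα : ClassKinf α)
    (hσ : ClassK σ) : ∃ γ, ClassK γ ∧ EqOn (α ∘ γ) σ (Ici 0) := by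
  obtain ⟨β, hβ, hright⟩ := hα.exists_classK_rightInvOn
  exact ⟨β ∘ σ, hβ.comp hσ, fun _ hs ↦ hright (hσ.nonneg hs)⟩

theorem _root_.ClassK.neg_add_le_neg_half_of_le_add {α σ γ : ℝ → ℝ} (hα : ClassK α)
    (hσ : ClassK σ) (hγ : ClassK γ) {ε s s' r : ℝ} (hαγ : α (γ s) = 2 * σ s) (hε : 0 ≤ ε)
    (hs' : 0 ≤ s') (hs's : s' ≤ s) (hr : ε + γ s ≤ r) :
    -α r + σ s' ≤ -(α ε / 2) := by
  have hγs : 0 ≤ γ s := hγ.nonneg (hs'.trans hs's)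
  have hε_le : α ε ≤ α r := hα.mono hε (by linarith)
  have hγ_le : α (γ s) ≤ α r := hα.mono hγs (by linarith)
  have hσ_le : σ s' ≤ σ s := hσ.mono hs' hs's
  linarith

theorem _root_.le_sub_mul_of_limsup_slope_le {W : ℝ → ℝ} {a b c : ℝ}
    (hW : ContinuousOn W (Icc a b))
    (hD : ∀ t ∈ Ico a b,
      limsup (fun h : ℝ ↦ (((W (t + h) - W t) / h : ℝ) : EReal)) (𝓝[>] 0) ≤ ((-c : ℝ) : EReal)) :
    ∀ t ∈ Icc a b, W t ≤ W a - c * (t - a) := by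
  refine image_le_of_liminf_slope_right_le_deriv_boundary hW (by simp) (by fun_prop)
    (B' := fun _ ↦ -c) (fun t _ ↦ ?_) (fun t ht ρ hρ ↦ ?_)
  · simpa using ((((hasDerivAt_id t).sub_const a).const_mul c).const_sub (W a)).hasDerivWithinAt
  · have hlt := (hD t ht).trans_lt (EReal.coe_lt_coe_iff.2 hρ)
    refine Eventually.frequently ?_
    rw [← add_zero t, ← map_add_left_nhdsGT, eventually_map]
    filter_upwards [eventually_lt_of_limsup_lt hlt] with h hh
    rw [slope_def_field, add_zero, add_sub_cancel_left]
    exact EReal.coe_lt_coe_iff.1 hh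

theorem DiniLimsup_phi_shift (S : ControlSystem X U) (V : X → ℝ) {x : X} {u : ℝ → U}
    (hu : u ∈ S.inputs) {t : ℝ} (ht : 0 ≤ t) :
    S.DiniLimsup V (S.phi t x u) (fun s ↦ u (s + t)) =
      limsup (fun h : ℝ ↦ (((V (S.phi (t + h) x u) - V (S.phi t x u)) / h : ℝ) : EReal))
        (𝓝[>] 0) := by
  refine limsup_congr ?_
  filter_upwards [self_mem_nhdsWithin] with h hh
  rw [S.cocycle t ht h (le_of_lt hh) x u hu]

theorem apply_phi_le_sub_mul (S : ControlSystem X U) {V : X → ℝ} (hV : Continuous V) {x : X}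
    {u : ℝ → U} (hu : u ∈ S.inputs) {τ c : ℝ}
    (hD : ∀ t ∈ Ico 0 τ, S.DiniLimsup V (S.phi t x u) (fun s ↦ u (s + t)) ≤ ((-c : ℝ) : EReal)) :
    ∀ t ∈ Icc 0 τ, V (S.phi t x u) ≤ V x - c * t := by
  have hW : ContinuousOn (fun t ↦ V (S.phi t x u)) (Icc 0 τ) :=
    hV.comp_continuousOn ((S.cont x u hu).mono Icc_subset_Ici_self)
  simpa [S.identity] using le_sub_mul_of_limsup_slope_le hW fun t ht ↦
    S.DiniLimsup_phi_shift V hu ht.1 ▸ hD t ht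

/-- If a forward complete control system possesses a non-coercive ISS Lyapunov function,
then it has the uniform limit property. -/
theorem ULIM_of_nonCoerciveISSLyapunov (S : ControlSystem X U) (V : X → ℝ)
    (h : S.NonCoerciveISSLyapunov V) : S.ULIM := by
  obtain ⟨hVc, hVnn, ψ₂, α, σ, hψ, hα, hσ, -, hVle, hdecay⟩ := h
  obtain ⟨γ, hγ, hαγ⟩ := hα.exists_classK_comp_eqOn (hσ.const_mul two_pos)
  refine ⟨γ, Or.inl hγ, fun ε hε r hr ↦ ?_⟩
  have hαε : 0 < α ε := hα.1.pos hε
  have hψr : 0 ≤ ψ₂ r := hψ.1.nonneg hr.le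
  set τ := 2 * (ψ₂ r + 1) / α ε
  have hτ : 0 ≤ τ := by positivity
  refine ⟨τ, hτ, fun x hx u hu ↦ ?_⟩
  by_contra! hfar
  have hdissip : ∀ t ∈ Ico 0 τ,
      S.DiniLimsup V (S.phi t x u) (fun s ↦ u (s + t)) ≤ ((-(α ε / 2) : ℝ) : EReal) :=
    fun t ht ↦ (hdecay _ _ (S.shift_mem u hu t ht.1)).trans <| EReal.coe_le_coe_iff.2 <|
      hα.1.neg_add_le_neg_half_of_le_add hσ hγ (hαγ (S.Unorm_nonneg u)) hε.le
        (S.Unorm_nonneg _) (S.shift_norm u hu t ht.1) (hfar t (Ico_subset_Icc_self ht)).le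
  have hVτ := S.apply_phi_le_sub_mul hVc hu hdissip τ ⟨hτ, le_rfl⟩
  have hVx : V x ≤ ψ₂ r := (hVle x).trans (hψ.1.mono (norm_nonneg x) hx)
  have hτ_eq : α ε / 2 * τ = ψ₂ r + 1 := by simp only [τ]; field_simp
  linarith [hVnn (S.phi τ x u)]

end ControlSystem
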